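/- arXiv:1807.01053 — 9 statements merged into one kernel-verified Lean document; each statement's English description precedes it below -/
import Mathlib

section
/- The Kleisli triple H₀ is a monad on sets: for every f : X → H₀ Y and every (d,e) ∈ H₀ X the pair f^*(d,e) again satisfies the flattening condition (so f^* is well defined), and the monad laws hold: f^* ∘ η = f for all f : X → H₀ Y; η^* = id on H₀ X; and (g^* ∘ f)^* = g^* ∘ f^* for all f : X → H₀ Y and g : Y → H₀ Z. -/
open scoped ENNReal NNReal
open Classical

universe u v w

/-- Elements of `H₀ X`: a duration in `ℝ≥0∞` and a total evolution `ℝ≥0 → X`. -/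
abbrev Traj0 (X : Type u) := ℝ≥0∞ × (ℝ≥0 → X)

/-- The flattening condition: if the duration is finite, the evolution is constant
from the duration onwards.  Membership in `H₀ X` means exactly `Flat0`. -/
def Flat0 {X : Type u} (p : Traj0 X) : Prop :=
  ∀ t : ℝ≥0, p.1 ≤ (t : ℝ≥0∞) → p.2 t = p.2 p.1.toNNReal

/-- The unit of `H₀`. -/
def eta0 {X : Type u} (x : X) : Traj0 X := (0, fun _ => x)

/-- The Kleisli lifting `f^*` of `H₀`. -/
noncomputable def kl0 {X : Type u} {Y : Type v} (f : X → Traj0 Y) (p : Traj0 X) : Traj0 Y :=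
  ((if p.1 ≠ ⊤ then p.1 + (f (p.2 p.1.toNNReal)).1 else ⊤),
    fun t =>
      if (t : ℝ≥0∞) ≤ p.1 then (f (p.2 t)).2 0
      else (f (p.2 p.1.toNNReal)).2 (t - p.1.toNNReal))

/-!
For a trajectory of finite duration `a`, the lifted trajectory `f^* (a, e)` runs for time `a`
and then continues as `f (e a)`; and "continuing as `q` after time `a`" is preserved by any
lifting `g^*`. Flatness of `f^* p` and associativity follow by comparing evolutions before and
after time `a`. Infinite durations are absorbing, and there all laws hold pointwise.
-/

section Kleisli

variable {X : Type u} {Y : Type v} {Z : Type w}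

@[simp]
lemma flat0_top (e : ℝ≥0 → X) : Flat0 (⊤, e) := by
  simp [Flat0]

@[simp]
lemma flat0_coe_iff (a : ℝ≥0) (e : ℝ≥0 → X) :
    Flat0 (a, e) ↔ ∀ t, a ≤ t → e t = e a := by
  simp [Flat0]

@[simp]
lemma kl0_top (f : X → Traj0 Y) (e : ℝ≥0 → X) :
    kl0 f (⊤, e) = (⊤, fun t => (f (e t)).2 0) := by
  simp [kl0]

@[simp]
lemma kl0_coe (f : X → Traj0 Y) (a : ℝ≥0) (e : ℝ≥0 → X) :
    kl0 f (a, e) =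
      (a + (f (e a)).1, fun t => if t ≤ a then (f (e t)).2 0 else (f (e a)).2 (t - a)) := by
  simp [kl0]

lemma kl0_snd_of_le (f : X → Traj0 Y) {p : Traj0 X} {t : ℝ≥0} (ht : (t : ℝ≥0∞) ≤ p.1) :
    (kl0 f p).2 t = (f (p.2 t)).2 0 := by
  simp [kl0, ht]

@[simp]
lemma kl0_snd_zero (f : X → Traj0 Y) (p : Traj0 X) : (kl0 f p).2 0 = (f (p.2 0)).2 0 :=
  kl0_snd_of_le f (by simp)

def HasTail (r : Traj0 X) (a : ℝ≥0) (q : Traj0 X) : Prop :=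
  r.1 = a + q.1 ∧ ∀ s, r.2 (a + s) = q.2 s

lemma hasTail_kl0_coe (f : X → Traj0 Y) (a : ℝ≥0) (e : ℝ≥0 → X) :
    HasTail (kl0 f (a, e)) a (f (e a)) := by
  refine ⟨by simp, fun s => ?_⟩
  by_cases hs : s = 0 <;> simp [hs]

lemma HasTail.flat0 {r q : Traj0 X} {a : ℝ≥0} (h : HasTail r a q) (hq : Flat0 q) : Flat0 r := by
  obtain ⟨R, e⟩ := r
  obtain ⟨B, e'⟩ := q
  obtain ⟨hR, hev⟩ := h
  dsimp only at hR hev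
  subst hR
  induction B using ENNReal.recTopCoe with
  | top => simp
  | coe b =>
    rw [flat0_coe_iff] at hq
    rw [← ENNReal.coe_add, flat0_coe_iff]
    intro t ht
    obtain ⟨s, rfl⟩ := exists_add_of_le (le_self_add.trans ht)
    rw [hev, hev, hq s (by simpa using ht)]

lemma HasTail.kl0 {r q : Traj0 X} {a : ℝ≥0} (h : HasTail r a q) (g : X → Traj0 Y) :
    HasTail (kl0 g r) a (kl0 g q) := by
  obtain ⟨R, e⟩ := r
  obtain ⟨B, e'⟩ := q
  obtain ⟨hR, hev⟩ := h
  dsimp only at hR hev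
  subst hR
  induction B using ENNReal.recTopCoe with
  | top => simp [HasTail, hev]
  | coe b =>
    rw [← ENNReal.coe_add, kl0_coe, kl0_coe]
    refine ⟨by simp [hev, add_assoc], fun s => ?_⟩
    simp [hev, add_tsub_add_eq_tsub_left]

lemma flat0_kl0 {f : X → Traj0 Y} (hf : ∀ x, Flat0 (f x)) (p : Traj0 X) : Flat0 (kl0 f p) := by
  obtain ⟨d, e⟩ := p
  induction d using ENNReal.recTopCoe with
  | top => simp
  | coe a => exact (hasTail_kl0_coe f a e).flat0 (hf (e a))

lemma kl0_eta0 (f : X → Traj0 Y) (x : X) : kl0 f (eta0 x) = f x := by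
  ext t
  · simp [kl0, eta0]
  · by_cases ht : t = 0 <;> simp [kl0, eta0, ht]

lemma Flat0.kl0_eta0_eq_self {p : Traj0 X} (hp : Flat0 p) : kl0 eta0 p = p := by
  obtain ⟨d, e⟩ := p
  induction d using ENNReal.recTopCoe with
  | top => simp [eta0]
  | coe a =>
    rw [flat0_coe_iff] at hp
    simp only [kl0_coe, eta0, Prod.mk.injEq, add_zero, true_and]
    funext t
    split_ifs with ht
    · rfl
    · exact (hp t (not_le.mp ht).le).symm

lemma kl0_kl0 (f : X → Traj0 Y) (g : Y → Traj0 Z) (p : Traj0 X) :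
    kl0 g (kl0 f p) = kl0 (fun x => kl0 g (f x)) p := by
  obtain ⟨d, e⟩ := p
  induction d using ENNReal.recTopCoe with
  | top => simp
  | coe a =>
    have h := (hasTail_kl0_coe f a e).kl0 g
    ext t
    · rw [h.1, kl0_coe]
    · rcases le_or_gt t a with ht | ht
      · have hta : (t : ℝ≥0∞) ≤ (kl0 f (a, e)).1 := by
          rw [kl0_coe]
          exact le_add_right (ENNReal.coe_le_coe.mpr ht)
        rw [kl0_snd_of_le g hta]
        simp [ht]
      · obtain ⟨s, rfl⟩ := exists_add_of_le ht.le
        rw [h.2 s, kl0_coe]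
        simp [ht.not_ge]

end Kleisli

/-- `H₀` is a monad on sets: the Kleisli lifting preserves the flattening condition
(hence is well defined on `H₀`), and the three monad laws hold. -/
theorem H0_is_monad :
    (∀ (X : Type u) (Y : Type v) (f : X → Traj0 Y), (∀ x, Flat0 (f x)) →
      ∀ p : Traj0 X, Flat0 p → Flat0 (kl0 f p)) ∧
    (∀ (X : Type u) (Y : Type v) (f : X → Traj0 Y), (∀ x, Flat0 (f x)) →
      ∀ x : X, kl0 f (eta0 x) = f x) ∧
    (∀ (X : Type u) (p : Traj0 X), Flat0 p → kl0 eta0 p = p) ∧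
    (∀ (X : Type u) (Y : Type v) (Z : Type w) (f : X → Traj0 Y) (g : Y → Traj0 Z),
      (∀ x, Flat0 (f x)) → (∀ y, Flat0 (g y)) →
      ∀ p : Traj0 X, Flat0 p → kl0 (fun x => kl0 g (f x)) p = kl0 g (kl0 f p)) :=
  ⟨fun _ _ _ hf p _ => flat0_kl0 hf p,
    fun _ _ f _ x => kl0_eta0 f x,
    fun _ _ hp => hp.kl0_eta0_eq_self,
    fun _ _ _ f g _ _ p _ => (kl0_kl0 f g p).symm⟩
end

section
/- H₊ is closed under the Kleisli lifting of H₀M: for every f : X → H₀M Y whose values all lie in H₊ Y, and every (d,e) ∈ H₊ X, the pair f^†(d,e) lies in H₊ Y. -/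
open scoped ENNReal NNReal
open Classical

universe u v w

/-- Raw trajectories: a duration in `ℝ≥0∞` and a partial evolution `ℝ≥0 → Option X`. -/
abbrev Traj (X : Type u) := ℝ≥0∞ × (ℝ≥0 → Option X)

/-- The flattening condition: if the duration is finite, the evolution is constant
from the duration onwards.  Membership in `H₀M X` means exactly `Flat`. -/
def Flat {X : Type u} (p : Traj X) : Prop :=
  ∀ t : ℝ≥0, p.1 ≤ (t : ℝ≥0∞) → p.2 t = p.2 p.1.toNNReal

/-- The unit of `H₀M`. -/
def eta {X : Type u} (x : X) : Traj X := (0, fun _ => some x)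

/-- The Kleisli lifting `f^†` of the monad `H₀M`. -/
noncomputable def kl {X : Type u} {Y : Type v} (f : X → Traj Y) (p : Traj X) : Traj Y :=
  if p.1 = ⊤ then (p.1, fun t => (p.2 t).bind fun x' => (f x').2 0)
  else
    match p.2 p.1.toNNReal with
    | none => (p.1, fun t => (p.2 t).bind fun x' => (f x').2 0)
    | some x =>
        (p.1 + (f x).1,
          fun t =>
            if (t : ℝ≥0∞) < p.1 then (p.2 t).bind fun x' => (f x').2 0
            else (f x).2 (t - p.1.toNNReal))

/-- Membership in `H₊ X ⊆ H₀M X`: the evolution is not everywhere `none`, and it is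
defined at every time instant strictly below the duration. -/
def memHp {X : Type u} (p : Traj X) : Prop :=
  p.2 ≠ (fun _ => none) ∧ ∀ t : ℝ≥0, (t : ℝ≥0∞) < p.1 → p.2 t ≠ none

/-- Membership in `H X ⊆ H₀M X`: either the evolution is total, or the duration is `∞`
and the domain of the evolution is downward closed. -/
def memH {X : Type u} (p : Traj X) : Prop :=
  (∀ t, p.2 t ≠ none) ∨
    (p.1 = ⊤ ∧ ∀ s t : ℝ≥0, s ≤ t → p.2 t ≠ none → p.2 s ≠ none)

/-- The approximation order `⊑` on `H₀M X`. -/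
def TrajLE {X : Type u} (p q : Traj X) : Prop :=
  p.1 ≤ q.1 ∧ (∀ t, p.2 t ≠ none → q.2 t = p.2 t) ∧
    (p.1 ≠ ⊤ → p.2 p.1.toNNReal ≠ none → p.1 = q.1)

/-- Join of an ω-chain in `H₀M X`: the duration is the supremum of the durations, and
the evolution at `t` is the common value `(c i).2 t` whenever it is `≠ none` for some
`i`, and `none` otherwise. -/
noncomputable def chainJoin {X : Type u} (c : ℕ → Traj X) : Traj X :=
  (⨆ i, (c i).1,
    fun t => if h : ∃ i, (c i).2 t ≠ none then (c h.choose).2 t else none)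

/-- `d⋆ = sup { s < d ∣ e is defined on [0, s) }`. -/
noncomputable def dstar {X : Type u} (p : Traj X) : ℝ≥0∞ :=
  sSup {s : ℝ≥0∞ | s < p.1 ∧ ∀ t : ℝ≥0, (t : ℝ≥0∞) < s → p.2 t ≠ none}

/-- The retraction `ρ : H₀M X → H₀M X` onto `H X`. -/
noncomputable def rho {X : Type u} (p : Traj X) : Traj X :=
  ((if ∀ t, p.2 t ≠ none then p.1 else ⊤),
    fun t =>
      if (t : ℝ≥0∞) ≤ dstar p then p.2 t
      else if ∀ t', p.2 t' ≠ none then p.2 (dstar p).toNNReal else none)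

/-- The iterates `f⁽ⁿ⁾` of `f : X → H₀M (Y ⊕ X)`. -/
noncomputable def iter {X Y : Type u} (f : X → Traj (Y ⊕ X)) : ℕ → X → Traj Y
  | 0, _ => (0, fun _ => none)
  | n + 1, x => kl (Sum.elim eta (iter f n)) (f x)

/-- The least-fixpoint iteration `f^‡ x = ⊔ₙ f⁽ⁿ⁾ x`. -/
noncomputable def iterStar {X Y : Type u} (f : X → Traj (Y ⊕ X)) (x : X) : Traj Y :=
  chainJoin fun n => iter f n x

/-- `f : X → H₊ (A ⊕ B)` is progressive in `B` (guarded in the second summand). -/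
def Prog {X : Type u} {A B : Type v} (f : X → Traj (A ⊕ B)) : Prop :=
  ∀ x, ∃ a : A, (f x).2 0 = some (Sum.inl a)

/-! If the duration of `p` is infinite, or `p` is undefined at its finite duration, `f^†` only
post-composes the evolution of `p` with `x ↦ (f x).ev 0`; this is defined everywhere because a
flat `H₊` trajectory is defined at time `0` (if its duration is `0`, flatness makes its evolution
constant). Otherwise `f^†` follows `p` up to its duration `d` and then splices in `f x`: the
result inherits flatness from `f x`, and definedness from `p` before `d` and from `f x` after. -/

noncomputable def splice {Y : Type v} (d : ℝ≥0) (e : ℝ≥0 → Option Y) (q : Traj Y) :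
    Traj Y :=
  (d + q.1, fun t => if t < d then e t else q.2 (t - d))

section kl

variable {X : Type u} {Y : Type v} (f : X → Traj Y) (e : ℝ≥0 → Option X)

theorem kl_top : kl f (⊤, e) = (⊤, fun t => (e t).bind fun x => (f x).2 0) := by
  simp [kl]

theorem kl_coe_of_eq_none {d : ℝ≥0} (hd : e d = none) :
    kl f (d, e) = ((d : ℝ≥0∞), fun t => (e t).bind fun x => (f x).2 0) := by
  simp [kl, hd]

theorem kl_coe_of_eq_some {d : ℝ≥0} {x : X} (hd : e d = some x) :
    kl f (d, e) = splice d (fun t => (e t).bind fun x => (f x).2 0) (f x) := by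
  simp [kl, hd, splice]

end kl

section bind

variable {X : Type u} {Y : Type v} {p : Traj X}

theorem flat_bind_ev (hp : Flat p) (h : X → Option Y) : Flat (p.1, fun t => (p.2 t).bind h) :=
  fun t ht => congrArg (·.bind h) (hp t ht)

theorem memHp_bind_ev (hp : memHp p) {h : X → Option Y} (hh : ∀ x, h x ≠ none) :
    memHp (p.1, fun t => (p.2 t).bind h) := by
  obtain ⟨t, ht⟩ := Function.ne_iff.mp hp.1
  obtain ⟨x, hx⟩ := Option.ne_none_iff_exists'.mp ht
  refine ⟨Function.ne_iff.mpr ⟨t, ?_⟩, fun s hs => ?_⟩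
  · simpa [hx] using hh x
  · obtain ⟨y, hy⟩ := Option.ne_none_iff_exists'.mp (hp.2 s hs)
    simpa [hy] using hh y

end bind

section splice

variable {Y : Type v} {q : Traj Y} {d : ℝ≥0} {e : ℝ≥0 → Option Y}

theorem flat_splice (hq : Flat q) : Flat (splice d e q) := by
  obtain ⟨c, r⟩ := q
  induction c using ENNReal.recTopCoe with
  | top => intro t ht; simp [splice] at ht
  | coe c =>
    intro t ht
    have hdct : d + c ≤ t := by simp only [splice] at ht; exact_mod_cast ht
    have htd : ¬ t < d := not_lt.mpr (le_trans le_self_add hdct)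
    simp only [splice, ← ENNReal.coe_add, ENNReal.toNNReal_coe, if_neg htd,
      if_neg (not_lt.mpr le_self_add), add_tsub_cancel_left]
    simpa using hq (t - d) (ENNReal.coe_le_coe.mpr (le_tsub_of_add_le_left hdct))

theorem memHp_splice (hq : memHp q) (he : ∀ t < d, e t ≠ none) : memHp (splice d e q) := by
  obtain ⟨s, hs⟩ := Function.ne_iff.mp hq.1
  refine ⟨Function.ne_iff.mpr ⟨d + s, ?_⟩, fun t ht => ?_⟩
  · simpa [splice] using hs
  · simp only [splice] at ht ⊢
    split_ifs with htd
    · exact he t htd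
    · rw [not_lt] at htd
      refine hq.2 (t - d) ?_
      rw [ENNReal.coe_sub]
      exact ENNReal.sub_lt_of_lt_add (ENNReal.coe_le_coe.mpr htd) (by rwa [add_comm])

end splice

theorem ev_zero_ne_none_of_memHp {Y : Type v} {q : Traj Y} (hflat : Flat q) (hq : memHp q) :
    q.2 0 ≠ none := by
  rcases eq_zero_or_pos q.1 with hc | hc
  · intro h0
    refine hq.1 (funext fun t => ?_)
    simpa [hc, h0] using hflat t (by simp [hc])
  · exact hq.2 0 hc

/-- `H₊` is closed under the Kleisli lifting of `H₀M`. -/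
theorem Hplus_closed_under_kl {X : Type u} {Y : Type v} (f : X → Traj Y)
    (hf : ∀ x, Flat (f x) ∧ memHp (f x))
    (p : Traj X) (hp : Flat p) (hpmem : memHp p) :
    Flat (kl f p) ∧ memHp (kl f p) := by
  have hf0 : ∀ x, (f x).2 0 ≠ none := fun x => ev_zero_ne_none_of_memHp (hf x).1 (hf x).2
  obtain ⟨d, e⟩ := p
  induction d using ENNReal.recTopCoe with
  | top => rw [kl_top]; exact ⟨flat_bind_ev hp _, memHp_bind_ev hpmem hf0⟩
  | coe d =>
    cases hed : e d with
    | none =>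
      rw [kl_coe_of_eq_none f e hed]
      exact ⟨flat_bind_ev hp _, memHp_bind_ev hpmem hf0⟩
    | some x =>
      rw [kl_coe_of_eq_some f e hed]
      refine ⟨flat_splice (hf x).1, memHp_splice (hf x).2 fun t ht => ?_⟩
      exact (memHp_bind_ev hpmem hf0).2 t (ENNReal.coe_lt_coe.mpr ht)
end

section
/- Progressiveness makes H₊ a guarded monad; in particular the three closure rules hold: (trv) for every f : X → H₊ Y, the map x ↦ (H₊ inl)(f x) obtained by post-composing the evolution of f x with some ∘ Sum.inl : Y → Option (Y ⊕ Z) is progressive in Z; (sum) if f : X → H₊ (Y ⊕ Z) and g : X' → H₊ (Y ⊕ Z) are both progressive in Z, then the copairing [f,g] : X ⊕ X' → H₊ (Y ⊕ Z) is progressive in Z; (cmp) if f : X → H₊ (Y ⊕ Z) is progressive in Z, g : Y → H₊ (V ⊕ W) is progressive in W, and h : Z → H₊ (V ⊕ W) is arbitrary, then ([g,h])^† ∘ f : X → H₊ (V ⊕ W) is progressive in W. -/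
open scoped ENNReal NNReal
open Classical

universe u v w

theorem Flat.snd_zero_ne_none {X : Type u} {p : Traj X} (hf : Flat p) (hp : memHp p) :
    p.2 0 ≠ none := by
  rcases eq_zero_or_pos p.1 with hd | hd
  · -- a flat trajectory of duration `0` is constant, so it would be everywhere `none`
    intro h0
    refine hp.1 (funext fun t => ?_)
    rw [hf t (by simp [hd]), hd, ENNReal.toNNReal_zero, h0]
  · exact hp.2 0 (by simpa using hd)

theorem kl_snd_zero {X : Type u} {Y : Type v} (f : X → Traj Y) {p : Traj X} {x : X}
    (hx : p.2 0 = some x) : (kl f p).2 0 = (f x).2 0 := by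
  unfold kl
  split_ifs with htop
  · simp [hx]
  split
  · simp [hx]
  next x' hx' =>
    rcases eq_zero_or_pos p.1 with hd | hd
    · -- at duration `0`, time `0` is the endpoint, so `x' = x`
      rw [hd, ENNReal.toNNReal_zero, hx, Option.some_inj] at hx'
      simp [hd, hx']
    · simp [hd, hx]

/-- Progressiveness makes `H₊` a guarded monad: the closure rules (trv), (sum) and
(cmp) hold. -/
theorem Hplus_guardedness_rules :
    -- (trv)
    (∀ (X Y Z : Type u) (f : X → Traj Y), (∀ x, Flat (f x) ∧ memHp (f x)) →
      Prog (fun x => (((f x).1, fun t => ((f x).2 t).map Sum.inl) : Traj (Y ⊕ Z)))) ∧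
    -- (sum)
    (∀ (X X' Y Z : Type u) (f : X → Traj (Y ⊕ Z)) (g : X' → Traj (Y ⊕ Z)),
      (∀ x, Flat (f x) ∧ memHp (f x)) → (∀ x', Flat (g x') ∧ memHp (g x')) →
      Prog f → Prog g → Prog (Sum.elim f g)) ∧
    -- (cmp)
    (∀ (X Y Z V W : Type u) (f : X → Traj (Y ⊕ Z)) (g : Y → Traj (V ⊕ W))
        (h : Z → Traj (V ⊕ W)),
      (∀ x, Flat (f x) ∧ memHp (f x)) → (∀ y, Flat (g y) ∧ memHp (g y)) →
      (∀ z, Flat (h z) ∧ memHp (h z)) →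
      Prog f → Prog g → Prog (fun x => kl (Sum.elim g h) (f x))) := by
  refine ⟨?_, fun _ _ _ _ _ _ _ _ pf pg => Sum.rec pf pg, ?_⟩
  · intro X Y Z f hf x
    obtain ⟨y, hy⟩ := Option.ne_none_iff_exists'.mp ((hf x).1.snd_zero_ne_none (hf x).2)
    exact ⟨y, by simp [hy]⟩
  · intro X Y Z V W f g h _ _ _ pf pg x
    obtain ⟨y, hy⟩ := pf x
    obtain ⟨v, hv⟩ := pg y
    exact ⟨v, by rw [kl_snd_zero _ hy, Sum.elim_inl, hv]⟩
end

section
/- The order ⊑ on H₀M X is ω-complete: for every ω-chain (d₀,e₀) ⊑ (d₁,e₁) ⊑ …, the pair (d,e) with d = supᵢ dᵢ and e t = eᵢ t whenever eᵢ t ≠ none for some i, and e t = none otherwise, is a well-defined element of H₀M X and is the least upper bound of the chain with respect to ⊑. -/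
open scoped ENNReal NNReal
open Classical

universe u v w

/-!
Along a chain, values that are defined never change, so the join's evolution is well defined
and extends every member. Once some member terminates (finite duration, defined there), every
later member has the same duration, which is then the supremum. The join's value at a time
depends only on the chain's values at that time, and by flatness these are constant beyond the
supremum of the durations; hence the join is flat.
-/

def Terminates {X : Type u} (p : Traj X) : Prop :=
  p.1 ≠ ⊤ ∧ p.2 p.1.toNNReal ≠ none

section

variable {X : Type u}

theorem TrajLE.refl (p : Traj X) : TrajLE p p :=
  ⟨le_rfl, fun _ _ => rfl, fun _ _ => rfl⟩

theorem TrajLE.fst_eq_of_terminates {p q : Traj X} (h : TrajLE p q) (hp : Terminates p) :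
    p.1 = q.1 :=
  h.2.2 hp.1 hp.2

theorem TrajLE.trans {p q r : Traj X} (hpq : TrajLE p q) (hqr : TrajLE q r) : TrajLE p r := by
  refine ⟨hpq.1.trans hqr.1, fun t ht => ?_, fun hfin hdef => ?_⟩
  · rw [hqr.2.1 t (by rwa [hpq.2.1 t ht]), hpq.2.1 t ht]
  · have hpq₁ : p.1 = q.1 := hpq.fst_eq_of_terminates ⟨hfin, hdef⟩
    have hq : Terminates q := ⟨hpq₁ ▸ hfin, by rwa [← hpq₁, hpq.2.1 _ hdef]⟩
    exact hpq₁.trans (hqr.fst_eq_of_terminates hq)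

instance : Std.Refl (TrajLE (X := X)) := ⟨TrajLE.refl⟩

instance : IsTrans (Traj X) TrajLE := ⟨fun _ _ _ => TrajLE.trans⟩

theorem Flat.terminates_of_le {p : Traj X} (hp : Flat p) {t : ℝ≥0} (ht : p.1 ≤ t)
    (hdef : p.2 t ≠ none) : Terminates p :=
  ⟨ne_top_of_le_ne_top ENNReal.coe_ne_top ht, hp t ht ▸ hdef⟩

theorem Flat.snd_eq_of_le {p : Traj X} (hp : Flat p) {s t : ℝ≥0} (hs : p.1 ≤ s) (ht : p.1 ≤ t) :
    p.2 s = p.2 t :=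
  (hp s hs).trans (hp t ht).symm

variable {c : ℕ → Traj X}

theorem trajLE_of_chain (hchain : ∀ i, TrajLE (c i) (c (i + 1))) {i j : ℕ} (hij : i ≤ j) :
    TrajLE (c i) (c j) :=
  Nat.rel_of_forall_rel_succ_of_le TrajLE hchain hij

theorem chainJoin_snd_eq_none_iff {t : ℝ≥0} :
    (chainJoin c).2 t = none ↔ ∀ i, (c i).2 t = none := by
  by_cases hex : ∃ i, (c i).2 t ≠ none
  · simp only [chainJoin, dif_pos hex]
    exact iff_of_false hex.choose_spec (not_forall.2 hex)
  · simp only [chainJoin, dif_neg hex]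
    exact iff_of_true trivial (not_exists_not.1 hex)

theorem chainJoin_snd_ne_none_iff {t : ℝ≥0} :
    (chainJoin c).2 t ≠ none ↔ ∃ i, (c i).2 t ≠ none := by
  simp [chainJoin_snd_eq_none_iff]

theorem chainJoin_snd_congr {s t : ℝ≥0} (h : ∀ i, (c i).2 s = (c i).2 t) :
    (chainJoin c).2 s = (chainJoin c).2 t :=
  congrArg (fun f : ℕ → Option X => if h : ∃ i, f i ≠ none then f h.choose else none) (funext h)

theorem chainJoin_snd_of_ne_none (hchain : ∀ i, TrajLE (c i) (c (i + 1))) {i : ℕ} {t : ℝ≥0}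
    (hi : (c i).2 t ≠ none) : (chainJoin c).2 t = (c i).2 t := by
  have hex : ∃ k, (c k).2 t ≠ none := ⟨i, hi⟩
  simp only [chainJoin, dif_pos hex]
  rcases le_total hex.choose i with hle | hle
  · exact (trajLE_of_chain hchain hle).2.1 t hex.choose_spec |>.symm
  · exact (trajLE_of_chain hchain hle).2.1 t hi

theorem iSup_fst_eq_of_terminates (hchain : ∀ i, TrajLE (c i) (c (i + 1))) {i : ℕ}
    (hi : Terminates (c i)) : ⨆ j, (c j).1 = (c i).1 := by
  refine le_antisymm (iSup_le fun j => ?_) (le_iSup (fun j => (c j).1) i)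
  rcases le_total j i with hle | hle
  · exact (trajLE_of_chain hchain hle).1
  · exact ((trajLE_of_chain hchain hle).fst_eq_of_terminates hi).ge

theorem chainJoin_flat (hflat : ∀ i, Flat (c i)) : Flat (chainJoin c) := by
  intro t ht
  have hsup : ((chainJoin c).1.toNNReal : ℝ≥0∞) = (chainJoin c).1 :=
    ENNReal.coe_toNNReal (ne_top_of_le_ne_top ENNReal.coe_ne_top ht)
  refine chainJoin_snd_congr fun i => (hflat i).snd_eq_of_le ?_ ?_
  · exact (le_iSup (fun j => (c j).1) i).trans ht
  · exact (le_iSup (fun j => (c j).1) i).trans hsup.ge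

theorem exists_terminates_of_chainJoin (hflat : ∀ i, Flat (c i))
    (h : Terminates (chainJoin c)) : ∃ i, Terminates (c i) := by
  obtain ⟨i, hi⟩ := chainJoin_snd_ne_none_iff.1 h.2
  have hsup : ((chainJoin c).1.toNNReal : ℝ≥0∞) = (chainJoin c).1 := ENNReal.coe_toNNReal h.1
  exact ⟨i, (hflat i).terminates_of_le ((le_iSup (fun j => (c j).1) i).trans hsup.ge) hi⟩

theorem le_chainJoin (hchain : ∀ i, TrajLE (c i) (c (i + 1))) (i : ℕ) :
    TrajLE (c i) (chainJoin c) :=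
  ⟨le_iSup (fun j => (c j).1) i, fun _ ht => chainJoin_snd_of_ne_none hchain ht,
    fun hfin hdef => (iSup_fst_eq_of_terminates hchain ⟨hfin, hdef⟩).symm⟩

theorem chainJoin_le (hflat : ∀ i, Flat (c i)) (hchain : ∀ i, TrajLE (c i) (c (i + 1)))
    {q : Traj X} (hq : ∀ i, TrajLE (c i) q) : TrajLE (chainJoin c) q := by
  refine ⟨iSup_le fun i => (hq i).1, fun t ht => ?_, fun hfin hdef => ?_⟩
  · obtain ⟨i, hi⟩ := chainJoin_snd_ne_none_iff.1 ht
    rw [chainJoin_snd_of_ne_none hchain hi]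
    exact (hq i).2.1 t hi
  · obtain ⟨i, hi⟩ := exists_terminates_of_chainJoin hflat ⟨hfin, hdef⟩
    exact (iSup_fst_eq_of_terminates hchain hi).trans ((hq i).fst_eq_of_terminates hi)

end

/-- `⊑` is ω-complete on `H₀M X`: the join of an ω-chain is a well-defined element of
`H₀M X` (its evolution agrees with any defined value of the chain and is `none` where
the whole chain is undefined) and it is the least upper bound of the chain. -/
theorem TrajLE_omega_complete (X : Type u) (c : ℕ → Traj X)
    (hflat : ∀ i, Flat (c i)) (hchain : ∀ i, TrajLE (c i) (c (i + 1))) :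
    (chainJoin c).1 = ⨆ i, (c i).1 ∧
    (∀ (t : ℝ≥0) (i : ℕ), (c i).2 t ≠ none → (chainJoin c).2 t = (c i).2 t) ∧
    (∀ t : ℝ≥0, (∀ i, (c i).2 t = none) → (chainJoin c).2 t = none) ∧
    Flat (chainJoin c) ∧
    (∀ i, TrajLE (c i) (chainJoin c)) ∧
    (∀ q : Traj X, Flat q → (∀ i, TrajLE (c i) q) → TrajLE (chainJoin c) q) :=
  ⟨rfl, fun _ _ => chainJoin_snd_of_ne_none hchain, fun _ => chainJoin_snd_eq_none_iff.2,
    chainJoin_flat hflat, le_chainJoin hchain, fun _ _ => chainJoin_le hflat hchain⟩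
end

section
/- Kleisli composition of H₀M is monotone in the trajectory argument: for every f : X → H₀M Y and all (d₁,e₁), (d₂,e₂) ∈ H₀M X, if (d₁,e₁) ⊑ (d₂,e₂) then f^†(d₁,e₁) ⊑ f^†(d₂,e₂). -/
open scoped ENNReal NNReal
open Classical

universe u v w

/-!
Split on whether `p` ends in a defined state. If it does (`p.1 < ⊤` and `p.2 p.1 = some x`), the
order forces `q` to have the same duration and the same end state, so `f^†` appends the same
continuation `f x` to both and only the prefixes before `p.1` differ, where `q` extends `p`.
Otherwise `f^† p` is just the prefix of `p` pushed through `f · 0`; by flatness `p` is undefined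
from `p.1` on, so this prefix lives strictly before `p.1 ≤ q.1`, where `f^† q` agrees with the
prefix of `q`.
-/

section

variable {X : Type u} {Y : Type v}

/-- The evolution of `f^† p` before the duration of `p`. -/
def klPrefix (f : X → Traj Y) (p : Traj X) (t : ℝ≥0) : Option Y :=
  (p.2 t).bind fun x => (f x).2 0

lemma ne_none_of_klPrefix_ne_none {f : X → Traj Y} {p : Traj X} {t : ℝ≥0}
    (h : klPrefix f p t ≠ none) : p.2 t ≠ none := by
  intro hp
  simp [klPrefix, hp] at h

lemma klPrefix_eq_of_trajLE {f : X → Traj Y} {p q : Traj X} (hpq : TrajLE p q) {t : ℝ≥0}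
    (h : klPrefix f p t ≠ none) : klPrefix f q t = klPrefix f p t := by
  rw [klPrefix, hpq.2.1 t (ne_none_of_klPrefix_ne_none h), klPrefix]

lemma kl_of_fst_eq_top (f : X → Traj Y) {p : Traj X} (h : p.1 = ⊤) :
    kl f p = (p.1, klPrefix f p) := by
  simp only [kl, if_pos h]
  rfl

lemma kl_of_end_eq_none (f : X → Traj Y) {p : Traj X} (h : p.2 p.1.toNNReal = none) :
    kl f p = (p.1, klPrefix f p) := by
  by_cases hp : p.1 = ⊤
  · exact kl_of_fst_eq_top f hp
  · simp only [kl, if_neg hp, h]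
    rfl

lemma kl_of_end_eq_some (f : X → Traj Y) {p : Traj X} (hp : p.1 ≠ ⊤) {x : X}
    (h : p.2 p.1.toNNReal = some x) :
    kl f p = (p.1 + (f x).1, fun t : ℝ≥0 =>
      if (t : ℝ≥0∞) < p.1 then klPrefix f p t else (f x).2 (t - p.1.toNNReal)) := by
  simp only [kl, if_neg hp, h]
  rfl

lemma fst_le_fst_kl (f : X → Traj Y) (p : Traj X) : p.1 ≤ (kl f p).1 := by
  by_cases hp : p.1 = ⊤
  · rw [kl_of_fst_eq_top f hp]
  · rcases h : p.2 p.1.toNNReal with _ | x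
    · rw [kl_of_end_eq_none f h]
    · rw [kl_of_end_eq_some f hp h]
      exact le_self_add

lemma kl_snd_of_lt (f : X → Traj Y) {p : Traj X} {t : ℝ≥0} (ht : (t : ℝ≥0∞) < p.1) :
    (kl f p).2 t = klPrefix f p t := by
  by_cases hp : p.1 = ⊤
  · rw [kl_of_fst_eq_top f hp]
  · rcases h : p.2 p.1.toNNReal with _ | x
    · rw [kl_of_end_eq_none f h]
    · rw [kl_of_end_eq_some f hp h]
      exact if_pos ht

lemma Flat.lt_fst_of_ne_none {p : Traj X} (hp : Flat p) (hend : p.2 p.1.toNNReal = none)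
    {t : ℝ≥0} (ht : p.2 t ≠ none) : (t : ℝ≥0∞) < p.1 := by
  by_contra hle
  exact ht ((hp t (not_lt.mp hle)).trans hend)

lemma trajLE_kl_of_end_eq_some (f : X → Traj Y) {p q : Traj X} (hpq : TrajLE p q)
    (hp : p.1 ≠ ⊤) {x : X} (hx : p.2 p.1.toNNReal = some x) :
    TrajLE (kl f p) (kl f q) := by
  have hq : q.1 = p.1 := (hpq.2.2 hp (by simp [hx])).symm
  have hqx : q.2 q.1.toNNReal = some x := by rw [hq, hpq.2.1 _ (by simp [hx]), hx]
  rw [kl_of_end_eq_some f hp hx, kl_of_end_eq_some f (hq ▸ hp) hqx, hq]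
  refine ⟨le_rfl, fun t ht => ?_, fun _ _ => rfl⟩
  dsimp only at ht ⊢
  split_ifs at ht ⊢
  · exact klPrefix_eq_of_trajLE hpq ht
  · rfl

lemma trajLE_kl_of_open (f : X → Traj Y) {p q : Traj X} (hp : Flat p) (hpq : TrajLE p q)
    (hopen : p.1 = ⊤ ∨ p.2 p.1.toNNReal = none) :
    TrajLE (kl f p) (kl f q) := by
  have hlt : ∀ t : ℝ≥0, p.2 t ≠ none → (t : ℝ≥0∞) < p.1 := by
    rcases hopen with htop | hend
    · exact fun t _ => htop ▸ ENNReal.coe_lt_top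
    · exact fun t => Flat.lt_fst_of_ne_none hp hend
  rw [hopen.elim (kl_of_fst_eq_top f) (kl_of_end_eq_none f)]
  refine ⟨hpq.1.trans (fst_le_fst_kl f q), fun t ht => ?_, fun hp1 ht => ?_⟩
  · have htp := hlt t (ne_none_of_klPrefix_ne_none ht)
    rw [kl_snd_of_lt f (htp.trans_le hpq.1), klPrefix_eq_of_trajLE hpq ht]
  · have := hlt _ (ne_none_of_klPrefix_ne_none ht)
    rw [ENNReal.coe_toNNReal hp1] at this
    exact (lt_irrefl _ this).elim

end

theorem kl_monotone_traj_general {X : Type u} {Y : Type v} (f : X → Traj Y)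
    (p q : Traj X) (hp : Flat p)
    (hpq : TrajLE p q) :
    TrajLE (kl f p) (kl f q) := by
  by_cases hopen : p.1 = ⊤ ∨ p.2 p.1.toNNReal = none
  · exact trajLE_kl_of_open f hp hpq hopen
  · push Not at hopen
    obtain ⟨x, hx⟩ := Option.ne_none_iff_exists'.mp hopen.2
    exact trajLE_kl_of_end_eq_some f hpq hopen.1 hx

/-- Kleisli composition of `H₀M` is monotone in the trajectory argument. -/
theorem kl_monotone_traj {X : Type u} {Y : Type v} (f : X → Traj Y)
    (hf : ∀ x, Flat (f x)) (p q : Traj X) (hp : Flat p) (hq : Flat q)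
    (hpq : TrajLE p q) :
    TrajLE (kl f p) (kl f q) :=
  kl_monotone_traj_general f p q hp hpq
end

section
/- Kleisli composition of H₀M is monotone in the function argument: for all f, g : X → H₀M Y with f x ⊑ g x for every x ∈ X, and every (d,e) ∈ H₀M X, one has f^†(d,e) ⊑ g^†(d,e). -/
open scoped ENNReal NNReal
open Classical

universe u v w

theorem Option.bind_eq_bind_of_extends {α β : Type*} {φ ψ : α → Option β}
    (h : ∀ a, φ a ≠ none → ψ a = φ a) (o : Option α) (ho : o.bind φ ≠ none) :
    o.bind ψ = o.bind φ := by
  cases o with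
  | none => exact absurd rfl ho
  | some a => exact h a ho

theorem trajLE_of_extends {Y : Type v} (d : ℝ≥0∞) {a b : ℝ≥0 → Option Y}
    (hab : ∀ t, a t ≠ none → b t = a t) : TrajLE (d, a) (d, b) :=
  ⟨le_rfl, hab, fun _ _ => rfl⟩

theorem ENNReal.toNNReal_add_sub_toNNReal {a b : ℝ≥0∞} (ha : a ≠ ⊤) (hb : b ≠ ⊤) :
    (a + b).toNNReal - a.toNNReal = b.toNNReal := by
  rw [ENNReal.toNNReal_add ha hb, add_tsub_cancel_left]

theorem trajLE_concat {Y : Type v} {d : ℝ≥0∞} (hd : d ≠ ⊤) {a b : ℝ≥0 → Option Y}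
    (hab : ∀ t, a t ≠ none → b t = a t) {q r : Traj Y} (hqr : TrajLE q r) :
    TrajLE (d + q.1, fun t => if (t : ℝ≥0∞) < d then a t else q.2 (t - d.toNNReal))
      (d + r.1, fun t => if (t : ℝ≥0∞) < d then b t else r.2 (t - d.toNNReal)) := by
  refine ⟨add_le_add_right hqr.1 d, fun t ht => ?_, fun hdq hne => ?_⟩
  · dsimp only at ht ⊢
    split_ifs at ht ⊢
    · exact hab t ht
    · exact hqr.2.1 _ ht
  · have hq : q.1 ≠ ⊤ := fun h => hdq (by simp [h])
    have hend : ¬ (((d + q.1).toNNReal : ℝ≥0∞) < d) := by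
      rw [ENNReal.coe_toNNReal hdq]
      exact not_lt.2 le_self_add
    dsimp only at hne ⊢
    simp only [if_neg hend, ENNReal.toNNReal_add_sub_toNNReal hd hq] at hne
    rw [hqr.2.2 hq hne]

theorem kl_monotone_fun_general {X : Type u} {Y : Type v} (f g : X → Traj Y)
    (hfg : ∀ x, TrajLE (f x) (g x)) (p : Traj X) :
    TrajLE (kl f p) (kl g p) := by
  have hstart : ∀ t, ((p.2 t).bind fun x => (f x).2 0) ≠ none →
      ((p.2 t).bind fun x => (g x).2 0) = (p.2 t).bind fun x => (f x).2 0 :=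
    fun t => Option.bind_eq_bind_of_extends (fun x => (hfg x).2.1 0) (p.2 t)
  unfold kl
  by_cases hd : p.1 = ⊤
  · simp only [if_pos hd]
    exact trajLE_of_extends _ hstart
  · simp only [if_neg hd]
    cases p.2 p.1.toNNReal with
    | none => exact trajLE_of_extends _ hstart
    | some x => exact trajLE_concat hd hstart (hfg x)

/-- Kleisli composition of `H₀M` is monotone in the function argument. -/
theorem kl_monotone_fun {X : Type u} {Y : Type v} (f g : X → Traj Y)
    (hf : ∀ x, Flat (f x)) (hg : ∀ x, Flat (g x)) (hfg : ∀ x, TrajLE (f x) (g x))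
    (p : Traj X) (hp : Flat p) :
    TrajLE (kl f p) (kl g p) :=
  kl_monotone_fun_general f g hfg p
end

section
/- Kleisli composition of H₀M is ω-continuous in the function argument: for every ω-chain of functions f₀, f₁, … : X → H₀M Y with fᵢ x ⊑ fᵢ₊₁ x for all i and x, and every (d,e) ∈ H₀M X, one has (⊔ᵢ fᵢ)^†(d,e) = ⊔ᵢ fᵢ^†(d,e), where (⊔ᵢ fᵢ) x = ⊔ᵢ (fᵢ x). -/
open scoped ENNReal NNReal
open Classical

universe u v w

/-! The evolution of `f^† p` at time `t` is either `none` or a single value `(f x).2 s`, read off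
at a point `(x, s)` that depends on `p` and `t` only; its duration is `p.1`, plus `(f x).1` when
`p` ends in a state `x`. Joins of sequences act pointwise on evolutions and commute with
`p.1 + ·` on durations, so they pass through `f^†`. -/

section

variable {X : Type u} {Y : Type v}

noncomputable def lastState (p : Traj X) : Option X :=
  if p.1 = ⊤ then none else p.2 p.1.toNNReal

noncomputable def klLookup (p : Traj X) (t : ℝ≥0) : Option (X × ℝ≥0) :=
  match lastState p with
  | some x => if (t : ℝ≥0∞) < p.1 then (p.2 t).map (·, 0) else some (x, t - p.1.toNNReal)
  | none => (p.2 t).map (·, 0)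

theorem kl_eq_lookup (f : X → Traj Y) (p : Traj X) :
    kl f p = (p.1 + (lastState p).elim 0 (fun x => (f x).1),
      fun t => (klLookup p t).bind fun a => (f a.1).2 a.2) := by
  by_cases hp : p.1 = ⊤
  · simp [kl, klLookup, lastState, hp, Option.bind_map]
  cases hx : p.2 p.1.toNNReal with
  | none => simp [kl, klLookup, lastState, hp, hx, Option.bind_map]
  | some x =>
    simp only [kl, klLookup, lastState, hp, hx, if_false, Option.elim_some, Prod.mk.injEq,
      true_and]
    funext t
    split_ifs <;> simp [Option.bind_map]

theorem chainJoin_snd_of_eq_bind {Z : Type w} (c : ℕ → Traj Y) (F : ℕ → Z → Traj Y)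
    (o : Option (Z × ℝ≥0)) (t : ℝ≥0) (h : ∀ i, (c i).2 t = o.bind fun a => (F i a.1).2 a.2) :
    (chainJoin c).2 t = o.bind fun a => (chainJoin fun i => F i a.1).2 a.2 := by
  cases o <;> simp [chainJoin, h]

end

theorem kl_continuous_fun_general {X : Type u} {Y : Type v} (F : ℕ → X → Traj Y)
    (p : Traj X) :
    kl (fun x => chainJoin fun i => F i x) p = chainJoin fun i => kl (F i) p := by
  simp only [kl_eq_lookup]
  refine Prod.ext ?_ (funext fun t => ?_)
  · cases lastState p <;> simp [chainJoin, ENNReal.add_iSup]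
  · exact (chainJoin_snd_of_eq_bind _ _ _ t fun _ => rfl).symm

/-- Kleisli composition of `H₀M` is ω-continuous in the function argument. -/
theorem kl_continuous_fun {X : Type u} {Y : Type v} (F : ℕ → X → Traj Y)
    (hflat : ∀ i x, Flat (F i x)) (hchain : ∀ i x, TrajLE (F i x) (F (i + 1) x))
    (p : Traj X) (hp : Flat p) :
    kl (fun x => chainJoin fun i => F i x) p = chainJoin fun i => kl (F i) p :=
  kl_continuous_fun_general F p
end

section
/- ρ is compatible with Kleisli lifting (the key equation making H a monad): for every f : X → H₀M Y and every (d,e) ∈ H₀M X, ρ(f^†(d,e)) = ρ((ρ ∘ f)^†(ρ(d,e))). -/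
open scoped ENNReal NNReal
open Classical

universe u v w

/-!
Outside the total case, `ρ` keeps only `d⋆` and the evolution on `[0, d⋆]`, and `d⋆` is
characterised by `s ≤ d⋆ ↔ s ≤ d ∧ e is defined on [0, s)`. The equation splits into
`ρ ∘ (ρ ∘ f)^† = ρ ∘ f^†` and `ρ ∘ g^† ∘ ρ = ρ ∘ g^†` on flat trajectories. In both, replacing
the continuation, resp. the trajectory, by its `ρ`-image changes neither the first gap in the
domain of definition (cut off at the duration) nor the evolution before it, and these
determine `ρ` of a non-total trajectory.
-/

section Trajectories

variable {X : Type u} {Y : Type v}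

def DefinedBelow (e : ℝ≥0 → Option X) (s : ℝ≥0∞) : Prop :=
  ∀ t : ℝ≥0, (t : ℝ≥0∞) < s → e t ≠ none

noncomputable def truncate (e : ℝ≥0 → Option X) (c : ℝ≥0∞) (t : ℝ≥0) : Option X :=
  if (t : ℝ≥0∞) ≤ c then e t else none

noncomputable def concatAt (d : ℝ≥0∞) (a b : ℝ≥0 → Option X) (t : ℝ≥0) : Option X :=
  if (t : ℝ≥0∞) < d then a t else b (t - d.toNNReal)

namespace DefinedBelow

variable {e : ℝ≥0 → Option X} {s s' : ℝ≥0∞}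

theorem mono (h : DefinedBelow e s) (hs : s' ≤ s) : DefinedBelow e s' :=
  fun t ht => h t (ht.trans_le hs)

theorem le_of_eq_none (h : DefinedBelow e s) {t : ℝ≥0} (ht : e t = none) : s ≤ t :=
  not_lt.mp fun hlt => h t hlt ht

theorem of_bind {g : X → Option Y} (h : DefinedBelow (fun t => (e t).bind g) s) :
    DefinedBelow e s := by
  intro t ht he
  exact h t ht (by simp [he])

end DefinedBelow

theorem definedBelow_zero (e : ℝ≥0 → Option X) : DefinedBelow e 0 :=
  fun _ ht => (not_lt_zero ht).elim

theorem definedBelow_truncate {e : ℝ≥0 → Option X} {c s : ℝ≥0∞} :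
    DefinedBelow (truncate e c) s ↔ s ≤ c ∧ DefinedBelow e s := by
  constructor
  · intro h
    refine ⟨not_lt.mp fun hcs => ?_, fun t ht => ?_⟩
    · obtain ⟨t, hct, hts⟩ := ENNReal.lt_iff_exists_nnreal_btwn.mp hcs
      exact h t hts (if_neg (not_le.mpr hct))
    · have := h t ht
      unfold truncate at this
      split_ifs at this
      exacts [this, absurd rfl this]
  · rintro ⟨hsc, h⟩ t ht
    rw [truncate, if_pos (ht.le.trans hsc)]
    exact h t ht

theorem truncate_bind (e : ℝ≥0 → Option X) (c : ℝ≥0∞) (g : X → Option Y) :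
    (fun t => (truncate e c t).bind g) = truncate (fun t => (e t).bind g) c := by
  funext t
  unfold truncate
  split_ifs <;> rfl

theorem concatAt_add {d : ℝ≥0∞} (hd : d ≠ ⊤) (a b : ℝ≥0 → Option X) (u : ℝ≥0) :
    concatAt d a b (d.toNNReal + u) = b u := by
  rw [concatAt, if_neg, add_tsub_cancel_left]
  rw [ENNReal.coe_add, ENNReal.coe_toNNReal hd, not_lt]
  exact le_self_add

theorem definedBelow_concatAt {d s : ℝ≥0∞} (hd : d ≠ ⊤) {a b : ℝ≥0 → Option X} :
    DefinedBelow (concatAt d a b) s ↔ DefinedBelow a (min s d) ∧ DefinedBelow b (s - d) := by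
  constructor
  · intro h
    refine ⟨fun t ht => ?_, fun u hu => ?_⟩
    · have := h t (ht.trans_le inf_le_left)
      rwa [concatAt, if_pos (ht.trans_le inf_le_right)] at this
    · rw [← concatAt_add hd a b]
      refine h _ ?_
      rw [ENNReal.coe_add, ENNReal.coe_toNNReal hd]
      exact lt_tsub_iff_left.mp hu
  · rintro ⟨ha, hb⟩ t ht
    unfold concatAt
    split_ifs with htd
    · exact ha t (lt_min ht htd)
    · refine hb _ ?_
      rw [ENNReal.coe_sub, ENNReal.coe_toNNReal hd]
      exact ((ENNReal.cancel_of_ne hd).tsub_lt_tsub_iff_right (not_lt.mp htd)).mpr ht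

theorem le_dstar_iff {p : Traj X} {s : ℝ≥0∞} : s ≤ dstar p ↔ s ≤ p.1 ∧ DefinedBelow p.2 s := by
  constructor
  · intro h
    refine ⟨h.trans (sSup_le fun _ hr => hr.1.le), fun t ht => ?_⟩
    obtain ⟨r, hr, htr⟩ := lt_sSup_iff.mp (ht.trans_le h)
    exact hr.2 t htr
  · rintro ⟨hs, h⟩
    exact le_of_forall_lt_imp_le_of_dense fun r hr => le_sSup ⟨hr.trans_le hs, h.mono hr.le⟩

theorem definedBelow_dstar (p : Traj X) : DefinedBelow p.2 (dstar p) :=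
  (le_dstar_iff.mp le_rfl).2

theorem dstar_le_of_eq_none {p : Traj X} {t : ℝ≥0} (ht : p.2 t = none) : dstar p ≤ t :=
  (definedBelow_dstar p).le_of_eq_none ht

theorem dstar_eq_of_total {p : Traj X} (h : ∀ t, p.2 t ≠ none) : dstar p = p.1 :=
  eq_of_forall_le_iff fun _ => le_dstar_iff.trans (and_iff_left fun t _ => h t)

theorem rho_of_total {p : Traj X} (hp : Flat p) (h : ∀ t, p.2 t ≠ none) : rho p = p := by
  refine Prod.ext (if_pos h) (funext fun t => ?_)
  simp only [rho, if_pos h, dstar_eq_of_total h]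
  split_ifs with ht
  · rfl
  · exact (hp t (not_le.mp ht).le).symm

theorem rho_of_not_total {p : Traj X} (h : ¬ ∀ t, p.2 t ≠ none) :
    rho p = (⊤, truncate p.2 (dstar p)) := by
  simp only [rho, if_neg h]
  rfl

theorem rho_snd_zero (p : Traj X) : (rho p).2 0 = p.2 0 := by
  simp [rho]

theorem rho_eq_rho_of_not_total {p q : Traj X} (hp : ¬ ∀ t, p.2 t ≠ none)
    (hq : ¬ ∀ t, q.2 t ≠ none)
    (hs : ∀ s, s ≤ p.1 ∧ DefinedBelow p.2 s ↔ s ≤ q.1 ∧ DefinedBelow q.2 s)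
    (he : ∀ t : ℝ≥0, (t : ℝ≥0∞) ≤ dstar p → p.2 t = q.2 t) :
    rho p = rho q := by
  have hd : dstar p = dstar q :=
    eq_of_forall_le_iff fun s => le_dstar_iff.trans ((hs s).trans le_dstar_iff.symm)
  rw [rho_of_not_total hp, rho_of_not_total hq, ← hd]
  congr 1
  funext t
  unfold truncate
  split_ifs with ht
  exacts [he t ht, rfl]

theorem stop_or_some (p : Traj X) :
    (p.1 = ⊤ ∨ p.2 p.1.toNNReal = none) ∨ (p.1 ≠ ⊤ ∧ ∃ x, p.2 p.1.toNNReal = some x) := by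
  by_cases hd : p.1 = ⊤
  · exact Or.inl (Or.inl hd)
  · cases hx : p.2 p.1.toNNReal with
    | none => exact Or.inl (Or.inr rfl)
    | some x => exact Or.inr ⟨hd, x, rfl⟩

theorem kl_of_stop (f : X → Traj Y) {p : Traj X} (h : p.1 = ⊤ ∨ p.2 p.1.toNNReal = none) :
    kl f p = (p.1, fun t => (p.2 t).bind fun x => (f x).2 0) := by
  unfold kl
  rcases h with h | h
  · rw [if_pos h]
  · by_cases hd : p.1 = ⊤
    · rw [if_pos hd]
    · rw [if_neg hd]
      simp only [h]

theorem kl_of_some (f : X → Traj Y) {p : Traj X} {x : X} (hd : p.1 ≠ ⊤)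
    (hx : p.2 p.1.toNNReal = some x) :
    kl f p = (p.1 + (f x).1, concatAt p.1 (fun t => (p.2 t).bind fun x => (f x).2 0) (f x).2) := by
  unfold kl
  rw [if_neg hd]
  simp only [hx]
  rfl

end Trajectories

section Compatibility

variable {X : Type u} {Y : Type v}

theorem rho_concatAt_rho {d : ℝ≥0∞} (hd : d ≠ ⊤) (a : ℝ≥0 → Option Y) {q : Traj Y}
    (hq : ¬ ∀ t, q.2 t ≠ none) :
    rho (d + (rho q).1, concatAt d a (rho q).2) = rho (d + q.1, concatAt d a q.2) := by
  obtain ⟨u, hu⟩ : ∃ u, q.2 u = none := by push Not at hq; exact hq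
  rw [rho_of_not_total hq]
  refine rho_eq_rho_of_not_total ?_ ?_ (fun s => ?_) (fun t ht => ?_)
  · exact fun h => h (d.toNNReal + u) (by simp [concatAt_add hd, truncate, hu])
  · exact fun h => h (d.toNNReal + u) ((concatAt_add hd a q.2 u).trans hu)
  · simp only [definedBelow_concatAt hd, definedBelow_truncate, le_dstar_iff (p := q),
      tsub_le_iff_left, add_top, le_top, true_and]
    tauto
  · have ht' := (definedBelow_concatAt hd).mp (le_dstar_iff.mp ht).2
    rw [definedBelow_truncate] at ht'
    change concatAt d a (truncate q.2 (dstar q)) t = concatAt d a q.2 t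
    unfold concatAt
    split_ifs with htd
    · rfl
    · rw [truncate, if_pos (by rw [ENNReal.coe_sub, ENNReal.coe_toNNReal hd]; exact ht'.2.1)]

theorem rho_kl_rho_comp (f : X → Traj Y) (hf : ∀ x, Flat (f x)) (p : Traj X) :
    rho (kl (fun x => rho (f x)) p) = rho (kl f p) := by
  rcases stop_or_some p with hstop | ⟨hd, x, hx⟩
  · simp only [kl_of_stop _ hstop, rho_snd_zero]
  simp only [kl_of_some _ hd hx, rho_snd_zero]
  by_cases htot : ∀ t, (f x).2 t ≠ none
  · rw [rho_of_total (hf x) htot]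
  · exact rho_concatAt_rho hd _ htot

theorem rho_truncate_eq_rho {a : ℝ≥0 → Option Y} {c : ℝ≥0∞} (hc : c ≠ ⊤) {q : Traj Y}
    (hq : ¬ ∀ t, q.2 t ≠ none)
    (hs : ∀ s, s ≤ c ∧ DefinedBelow a s ↔ s ≤ q.1 ∧ DefinedBelow q.2 s)
    (he : ∀ t : ℝ≥0, (t : ℝ≥0∞) ≤ c → a t = q.2 t) :
    rho (⊤, truncate a c) = rho q := by
  refine rho_eq_rho_of_not_total (fun h => h (c.toNNReal + 1) ?_) hq
    (fun s => by simpa only [definedBelow_truncate, le_top, true_and] using hs s) (fun t ht => ?_)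
  · refine if_neg (not_le.mpr ?_)
    rw [ENNReal.coe_add, ENNReal.coe_toNNReal hc]
    exact ENNReal.lt_add_right hc one_ne_zero
  · have htc := (definedBelow_truncate.mp (le_dstar_iff.mp ht).2).1
    rw [← he t htc]
    exact if_pos htc

theorem rho_kl_rho (g : X → Traj Y) {p : Traj X} (hp : Flat p) :
    rho (kl g (rho p)) = rho (kl g p) := by
  by_cases htot : ∀ t, p.2 t ≠ none
  · rw [rho_of_total hp htot]
  obtain ⟨t₀, ht₀⟩ : ∃ t, p.2 t = none := by push Not at htot; exact htot
  have hc : dstar p ≠ ⊤ := ne_top_of_le_ne_top ENNReal.coe_ne_top (dstar_le_of_eq_none ht₀)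
  have hs_bind : ∀ s, s ≤ dstar p ∧ DefinedBelow (fun t => (p.2 t).bind fun x => (g x).2 0) s ↔
      s ≤ p.1 ∧ DefinedBelow (fun t => (p.2 t).bind fun x => (g x).2 0) s := fun s => by
    rw [le_dstar_iff]
    exact ⟨fun h => ⟨h.1.1, h.2⟩, fun h => ⟨⟨h.1, h.2.of_bind⟩, h.2⟩⟩
  rw [rho_of_not_total htot, kl_of_stop g (Or.inl rfl)]
  dsimp only
  rw [truncate_bind]
  rcases stop_or_some p with hstop | ⟨hd, x, hx⟩
  · rw [kl_of_stop g hstop]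
    exact rho_truncate_eq_rho hc (fun h => h t₀ (by simp [ht₀])) hs_bind fun _ _ => rfl
  have ht₀d : (t₀ : ℝ≥0∞) < p.1 := by
    by_contra! h
    rw [hp t₀ h, hx] at ht₀
    exact Option.some_ne_none x ht₀
  have hc₀ : dstar p ≤ t₀ := dstar_le_of_eq_none ht₀
  have hconcat₀ : concatAt p.1 (fun t => (p.2 t).bind fun x => (g x).2 0) (g x).2 t₀ = none := by
    simp [concatAt, ht₀d, ht₀]
  rw [kl_of_some g hd hx]
  refine rho_truncate_eq_rho hc (fun h => h t₀ hconcat₀) (fun s => (hs_bind s).trans ?_)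
    (fun t ht => (if_pos (ht.trans_lt (hc₀.trans_lt ht₀d))).symm)
  rw [definedBelow_concatAt hd]
  constructor
  · rintro ⟨hs, h⟩
    refine ⟨le_add_right hs, h.mono inf_le_left, ?_⟩
    rw [tsub_eq_zero_of_le hs]
    exact definedBelow_zero _
  · rintro ⟨-, h⟩
    have hs : s ≤ p.1 := ((definedBelow_concatAt hd).mpr h).le_of_eq_none hconcat₀ |>.trans ht₀d.le
    exact ⟨hs, by simpa only [min_eq_left hs] using h.1⟩

end Compatibility

/-- `ρ` is compatible with the Kleisli lifting of `H₀M` (the key equation making `H`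
a monad): `ρ ∘ f^† = ρ ∘ (ρ ∘ f)^† ∘ ρ`. -/
theorem rho_kl_compatible {X : Type u} {Y : Type v} (f : X → Traj Y)
    (hf : ∀ x, Flat (f x)) (p : Traj X) (hp : Flat p) :
    rho (kl f p) = rho (kl (fun x => rho (f x)) (rho p)) := by
  rw [rho_kl_rho _ hp, rho_kl_rho_comp f hf]
end

section
/- For every f : X → H₀M (Y ⊕ X), every x ∈ X, every natural number n and every t ∈ ℝ≥0: if (f⁽ⁿ⁾ x).ev t ≠ none and ((ρ ∘ f)⁽ⁿ⁾ x).ev t = none, then there exists t' ≤ t such that (f⁽ᵐ⁾ x).ev t' = none for all m ≥ n. -/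
open scoped ENNReal NNReal
open Classical

universe u v w

/-! By induction on `n`, unfolding `f⁽ⁿ⁺¹⁾ x = [η, f⁽ⁿ⁾]^† (f x)`. A hole of `f x` at some
`s ≤ t` is a hole of every later iterate. Otherwise `f x` and `ρ (f x)` agree up to `t`, so both
iterates at `t` are read off the same state `inr x₁` at a shifted time, and the induction
hypothesis for `x₁` applies. -/

section Kleisli

variable {X : Type u} {Y : Type v} (g : X → Traj Y) {p : Traj X} {s : ℝ≥0}

lemma kl_snd_of_lt_s19 (hs : (s : ℝ≥0∞) < p.1) :
    (kl g p).2 s = (p.2 s).bind fun x => (g x).2 0 := by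
  unfold kl
  split_ifs with htop
  · rfl
  · split <;> simp [hs]

lemma kl_snd_of_le (hp : p.1 ≠ ⊤) {x : X} (hx : p.2 p.1.toNNReal = some x)
    (hs : p.1 ≤ (s : ℝ≥0∞)) :
    (kl g p).2 s = (g x).2 (s - p.1.toNNReal) := by
  unfold kl
  rw [if_neg hp]
  split <;> simp_all [not_lt.2 hs]

lemma kl_snd_eq_none (hp : Flat p) (hs : p.2 s = none) : (kl g p).2 s = none := by
  by_cases hlt : (s : ℝ≥0∞) < p.1
  · rw [kl_snd_of_lt_s19 g hlt, hs, Option.bind_none]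
  · have htop : p.1 ≠ ⊤ := fun h => hlt (h ▸ ENNReal.coe_lt_top)
    have hdur : p.2 p.1.toNNReal = none := hp s (not_lt.1 hlt) ▸ hs
    unfold kl
    rw [if_neg htop]
    split <;> simp_all

end Kleisli

lemma elim_eta_snd_eq_none {X Y : Type u} {g : X → Traj Y} {v : Y ⊕ X} {s : ℝ≥0}
    (h : (Sum.elim eta g v).2 s = none) : ∃ x, v = Sum.inr x ∧ (g x).2 s = none := by
  cases v with
  | inl y => simp [eta] at h
  | inr x => exact ⟨x, rfl, h⟩

section Rho

variable {X : Type u} {p : Traj X}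

lemma Flat.snd_ne_none_of_le (hp : Flat p) {t : ℝ≥0} (hdur : p.1 ≤ (t : ℝ≥0∞))
    (ht : ∀ s ≤ t, p.2 s ≠ none) (s : ℝ≥0) : p.2 s ≠ none := by
  rcases le_or_gt s t with hst | hts
  · exact ht s hst
  · have htop : p.1 ≠ ⊤ := ne_top_of_le_ne_top ENNReal.coe_ne_top hdur
    rw [hp s (hdur.trans (by exact_mod_cast hts.le))]
    exact ht _ (by rwa [← ENNReal.coe_le_coe, ENNReal.coe_toNNReal htop])

lemma dstar_eq_fst (h : ∀ s, p.2 s ≠ none) : dstar p = p.1 := by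
  have hset : {s : ℝ≥0∞ | s < p.1 ∧ ∀ t : ℝ≥0, (t : ℝ≥0∞) < s → p.2 t ≠ none}
      = Set.Iio p.1 := by
    ext s
    exact and_iff_left fun t _ => h t
  rw [dstar, hset, isLUB_Iio.sSup_eq]

lemma Flat.rho_eq_self (hp : Flat p) (h : ∀ s, p.2 s ≠ none) : rho p = p := by
  refine Prod.ext (if_pos h) (funext fun s => ?_)
  change (if (s : ℝ≥0∞) ≤ dstar p then p.2 s else if ∀ t', p.2 t' ≠ none then
    p.2 (dstar p).toNNReal else none) = p.2 s
  rw [dstar_eq_fst h]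
  split_ifs with hs
  · rfl
  · exact (hp s (not_le.1 hs).le).symm

lemma fst_le_rho_fst : p.1 ≤ (rho p).1 := by
  unfold rho
  split_ifs <;> simp

lemma rho_snd_of_lt {t : ℝ≥0} (hdur : (t : ℝ≥0∞) < p.1) (ht : ∀ s ≤ t, p.2 s ≠ none) :
    (rho p).2 t = p.2 t := by
  have hdstar : (t : ℝ≥0∞) ≤ dstar p :=
    le_sSup ⟨hdur, fun s hs => ht s (by exact_mod_cast hs.le)⟩
  exact if_pos hdstar

end Rho

/-- If `t` lies below the duration, `v` is the state at `a = t`; otherwise `p` is total, so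
`rho p = p`, and `v` is the final state, entered at the duration `a`. -/
lemma Flat.exists_kl_snd_add_eq {Z : Type u} {p : Traj Z} (hp : Flat p) {t : ℝ≥0}
    (ht : ∀ s ≤ t, p.2 s ≠ none) :
    ∃ v a, a ≤ t ∧ ∀ {W : Type v} (g : Z → Traj W) (s : ℝ≥0), s ≤ t - a →
      (kl g p).2 (a + s) = (g v).2 s ∧ (kl g (rho p)).2 (a + s) = (g v).2 s := by
  rcases lt_or_ge (t : ℝ≥0∞) p.1 with hlt | hge
  · obtain ⟨v, hv⟩ := Option.ne_none_iff_exists'.1 (ht t le_rfl)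
    refine ⟨v, t, le_rfl, fun g s hs => ?_⟩
    obtain rfl : s = 0 := by simpa using hs
    rw [add_zero, kl_snd_of_lt_s19 g hlt, kl_snd_of_lt_s19 g (hlt.trans_le fst_le_rho_fst),
      rho_snd_of_lt hlt ht, hv]
    exact ⟨rfl, rfl⟩
  · have htop : p.1 ≠ ⊤ := ne_top_of_le_ne_top ENNReal.coe_ne_top hge
    have htotal := hp.snd_ne_none_of_le hge ht
    obtain ⟨v, hv⟩ := Option.ne_none_iff_exists'.1 (htotal p.1.toNNReal)
    have hdt : p.1.toNNReal ≤ t := by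
      simpa using (ENNReal.toNNReal_le_toNNReal htop ENNReal.coe_ne_top).2 hge
    refine ⟨v, p.1.toNNReal, hdt, fun g s _ => ?_⟩
    have hle : p.1 ≤ ((p.1.toNNReal + s : ℝ≥0) : ℝ≥0∞) := by
      rw [ENNReal.coe_add, ENNReal.coe_toNNReal htop]
      exact le_self_add
    rw [hp.rho_eq_self htotal, kl_snd_of_le g htop hv hle, add_tsub_cancel_left]
    exact ⟨rfl, rfl⟩

lemma iter_succ {X Y : Type u} (f : X → Traj (Y ⊕ X)) (n : ℕ) (x : X) :
    iter f (n + 1) x = kl (Sum.elim eta (iter f n)) (f x) := rfl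

/-- If the `n`-th iterate of `f` is defined at `t` while the `n`-th iterate of
`ρ ∘ f` is undefined at `t`, then there is `t' ≤ t` at which all later iterates of
`f` are undefined. -/
theorem iter_rho_divergence {X Y : Type u} (f : X → Traj (Y ⊕ X))
    (hf : ∀ x, Flat (f x)) (x : X) (n : ℕ) (t : ℝ≥0)
    (h1 : (iter f n x).2 t ≠ none)
    (h2 : (iter (fun x' => rho (f x')) n x).2 t = none) :
    ∃ t' : ℝ≥0, t' ≤ t ∧ ∀ m : ℕ, n ≤ m → (iter f m x).2 t' = none := by
  induction n generalizing x t with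
  | zero => exact absurd rfl h1
  | succ n ih =>
    have eq_succ (m : ℕ) (hm : n + 1 ≤ m) : ∃ k, n ≤ k ∧ m = k + 1 :=
      ⟨m - 1, by omega, by omega⟩
    by_cases hhole : ∃ s ≤ t, (f x).2 s = none
    · obtain ⟨s, hst, hs⟩ := hhole
      refine ⟨s, hst, fun m hm => ?_⟩
      obtain ⟨k, -, rfl⟩ := eq_succ m hm
      exact kl_snd_eq_none _ (hf x) hs
    push Not at hhole
    obtain ⟨v, a, hat, hkl⟩ := (hf x).exists_kl_snd_add_eq hhole
    rw [← add_tsub_cancel_of_le hat, iter_succ] at h1 h2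
    rw [(hkl _ _ le_rfl).1] at h1
    rw [(hkl _ _ le_rfl).2] at h2
    obtain ⟨x₁, rfl, h2⟩ := elim_eta_snd_eq_none h2
    obtain ⟨t₀, ht₀, hall⟩ := ih x₁ _ h1 h2
    refine ⟨a + t₀, add_le_of_le_tsub_left_of_le hat ht₀, fun m hm => ?_⟩
    obtain ⟨k, hk, rfl⟩ := eq_succ m hm
    rw [iter_succ, (hkl _ _ ht₀).1]
    exact hall k hk
end
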